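/- arXiv:2103.02977 — 6 statements merged into one kernel-verified Lean document; each statement's English description precedes it below -/
import Mathlib

section
/- Let X be a T3 space and D a closed upper semi-continuous decomposition of X. If (A_n) is a sequence of decomposition elements and A ∈ D satisfies A ∩ liminf A_n ≠ ∅, then limsup A_n ⊆ A. -/
/-!
Separate a point `p ∉ A` from the closed element `A` by an open `U ⊇ A` with `p ∉ closure U`
(regularity). Upper semi-continuity gives an open `V ⊇ A` such that every element meeting `V` lies
in `U`; since `A` contains a point of `liminf A_n`, eventually `A_n` meets `V`, hence `A_n ⊆ U`,
and then `limsup A_n ⊆ closure U`, so `p ∉ limsup A_n`.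
-/

open Filter Topology

section

variable {X : Type*} [TopologicalSpace X]

def kuratowskiLiminf (A : ℕ → Set X) : Set X :=
  {p | ∀ U ∈ 𝓝 p, ∀ᶠ n in atTop, (U ∩ A n).Nonempty}

def kuratowskiLimsup (A : ℕ → Set X) : Set X :=
  {p | ∀ U ∈ 𝓝 p, ∃ᶠ n in atTop, (U ∩ A n).Nonempty}

theorem kuratowskiLimsup_subset_closure {A : ℕ → Set X} {U : Set X}
    (hAU : ∀ᶠ n in atTop, A n ⊆ U) : kuratowskiLimsup A ⊆ closure U := by
  intro p hp
  rw [mem_closure_iff_nhds]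
  intro W hW
  obtain ⟨n, ⟨y, hyW, hyA⟩, hnU⟩ := ((hp W hW).and_eventually hAU).exists
  exact ⟨y, hyW, hnU hyA⟩

theorem exists_isOpen_superset_notMem_closure [RegularSpace X] {s : Set X} {p : X}
    (hs : IsClosed s) (hp : p ∉ s) : ∃ U, IsOpen U ∧ s ⊆ U ∧ p ∉ closure U := by
  obtain ⟨W, hW, hWc, hWs⟩ := exists_mem_nhds_isClosed_subset (hs.isOpen_compl.mem_nhds hp)
  refine ⟨Wᶜ, hWc.isOpen_compl, Set.subset_compl_comm.mp hWs, ?_⟩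
  rw [closure_compl, Set.notMem_compl_iff]
  exact mem_interior_iff_mem_nhds.mpr hW

theorem eventually_subset_of_usc (s : Setoid X)
    (husc : ∀ x : X, ∀ U : Set X, IsOpen U → {y : X | s.r x y} ⊆ U →
      ∃ V : Set X, IsOpen V ∧ {y : X | s.r x y} ⊆ V ∧ V ⊆ U ∧
        ∀ z : X, ({y : X | s.r z y} ∩ V).Nonempty → {y : X | s.r z y} ⊆ U)
    {a : ℕ → X} {x q : X} (hqx : s.r x q) (hq : q ∈ kuratowskiLiminf fun n ↦ {y | s.r (a n) y})
    {U : Set X} (hU : IsOpen U) (hxU : {y : X | s.r x y} ⊆ U) :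
    ∀ᶠ n in atTop, {y : X | s.r (a n) y} ⊆ U := by
  obtain ⟨V, hV, hxV, -, hVU⟩ := husc x U hU hxU
  filter_upwards [hq V (hV.mem_nhds (hxV hqx))] with n ⟨y, hyV, hyA⟩
  exact hVU (a n) ⟨y, hyA, hyV⟩

end

/-- Let `X` be a T3 space and `s` a closed upper semi-continuous decomposition of `X`.
If `(A n)` is a sequence of decomposition elements (classes of the points `a n`) and
the class `A` of `x` meets `liminf A_n`, then `limsup A_n ⊆ A`. -/
theorem limsup_subset_of_closed_usc {X : Type*} [TopologicalSpace X] [T3Space X]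
    (s : Setoid X)
    (hclosed : ∀ x : X, IsClosed {y : X | s.r x y})
    (husc : ∀ x : X, ∀ U : Set X, IsOpen U → {y : X | s.r x y} ⊆ U →
      ∃ V : Set X, IsOpen V ∧ {y : X | s.r x y} ⊆ V ∧ V ⊆ U ∧
        ∀ z : X, ({y : X | s.r z y} ∩ V).Nonempty → {y : X | s.r z y} ⊆ U)
    (a : ℕ → X) (x : X)
    (hmeet : ({y : X | s.r x y} ∩
      {p : X | ∀ U ∈ nhds p, ∀ᶠ n in atTop, (U ∩ {y : X | s.r (a n) y}).Nonempty}).Nonempty) :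
    {p : X | ∀ U ∈ nhds p, ∃ᶠ n in atTop, (U ∩ {y : X | s.r (a n) y}).Nonempty}
      ⊆ {y : X | s.r x y} := by
  obtain ⟨q, hqx, hq⟩ := hmeet
  intro p hp
  by_contra hpx
  obtain ⟨U, hU, hxU, hpU⟩ := exists_isOpen_superset_notMem_closure (hclosed x) hpx
  exact hpU (kuratowskiLimsup_subset_closure (eventually_subset_of_usc s husc hqx hq hU hxU) hp)
end

section
/- If D is a decomposition of a metric space all of whose elements are closed and which is null (all elements bounded and for every ε > 0 only finitely many elements have diameter greater than ε), then D is upper semi-continuous (in particular, for every element A and neighborhood U of A there is a neighborhood V ⊆ U of A such that every element meeting V lies in U). -/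
/-! Given `A ⊆ U` with `A` compact, choose `ε > 0` with `thickening ε A ⊆ U`. An element of
diameter at most `ε / 2` that meets `thickening (ε / 2) A` lies in `thickening ε A ⊆ U`. Only
finitely many elements have diameter greater than `ε / 2`; removing from `thickening (ε / 2) A`
the (closed, finite) union of those not contained in `U` gives the required neighbourhood. -/

open Metric Set

lemma Setoid.setOf_rel_eq_of_rel {X : Type*} (s : Setoid X) {x y : X} (h : s.r x y) :
    {w : X | s.r x w} = {w : X | s.r y w} :=
  Set.ext fun _ => ⟨s.trans (s.symm h), s.trans h⟩

lemma Metric.subset_thickening_add_diam_of_inter_thickening_nonempty {X : Type*}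
    [PseudoMetricSpace X] {A B : Set X} {δ : ℝ} (hB : Bornology.IsBounded B)
    (hBA : (B ∩ thickening δ A).Nonempty) : B ⊆ thickening (δ + diam B) A := by
  obtain ⟨b, hbB, hbA⟩ := hBA
  obtain ⟨a, haA, hba⟩ := mem_thickening_iff.1 hbA
  intro y hy
  refine mem_thickening_iff.2 ⟨a, haA, ?_⟩
  calc dist y a ≤ dist y b + dist b a := dist_triangle y b a
    _ < δ + diam B := by linarith [dist_le_diam_of_mem hB hy hbB]

lemma IsCompact.exists_isOpen_forall_subset_of_null_family {X : Type*} [MetricSpace X]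
    {𝒟 : Set (Set X)} {A U : Set X} (hA : IsCompact A) (hU : IsOpen U) (hAU : A ⊆ U)
    (hcpt : ∀ B ∈ 𝒟, IsCompact B) (hnull : ∀ ε : ℝ, 0 < ε → {B ∈ 𝒟 | ε < diam B}.Finite)
    (hmeet : ∀ B ∈ 𝒟, (B ∩ A).Nonempty → B ⊆ U) :
    ∃ V : Set X, IsOpen V ∧ A ⊆ V ∧ V ⊆ U ∧ ∀ B ∈ 𝒟, (B ∩ V).Nonempty → B ⊆ U := by
  obtain ⟨ε, hε, hεU⟩ := hA.exists_thickening_subset_open hU hAU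
  have hε2 : 0 < ε / 2 := half_pos hε
  set F := {B ∈ 𝒟 | ε / 2 < diam B ∧ ¬B ⊆ U}
  have hF : IsClosed (⋃ B ∈ F, B) :=
    ((hnull _ hε2).subset fun B hB => ⟨hB.1, hB.2.1⟩).isClosed_biUnion
      fun B hB => (hcpt B hB.1).isClosed
  have hsmall : thickening (ε / 2) A ⊆ U :=
    (thickening_mono (half_le_self hε.le) A).trans hεU
  refine ⟨thickening (ε / 2) A \ ⋃ B ∈ F, B, isOpen_thickening.sdiff hF, ?_,
    sdiff_subset.trans hsmall, ?_⟩
  · refine subset_sdiff.2 ⟨self_subset_thickening hε2 A, ?_⟩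
    simp only [disjoint_iUnion_right]
    exact fun B hB => disjoint_left.2 fun y hyA hyB => hB.2.2 (hmeet B hB.1 ⟨y, hyB, hyA⟩)
  · rintro B hB ⟨b, hbB, hbA, hbF⟩
    by_contra hBU
    have hdiam : diam B ≤ ε / 2 := not_lt.1 fun h => hbF (mem_biUnion ⟨hB, h, hBU⟩ hbB)
    refine hBU ((subset_thickening_add_diam_of_inter_thickening_nonempty
      (hcpt B hB).isBounded ⟨b, hbB, hbA⟩).trans ((thickening_mono ?_ A).trans hεU))
    linarith

/-- A null decomposition (all elements bounded, and for every `ε > 0` only finitely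
many elements have diameter greater than `ε`) of a (proper) metric space with all
elements closed is upper semi-continuous: the elements are compact, and every
neighborhood `U` of an element contains a neighborhood `V` of that element such that
every element meeting `V` lies in `U`. -/
theorem null_decomposition_usc {X : Type*} [MetricSpace X] [ProperSpace X]
    (s : Setoid X)
    (hclosed : ∀ x : X, IsClosed {y : X | s.r x y})
    (hbdd : ∀ x : X, Bornology.IsBounded {y : X | s.r x y})
    (hnull : ∀ ε : ℝ, 0 < ε →
      {A : Set X | (∃ x : X, A = {y : X | s.r x y}) ∧ ε < Metric.diam A}.Finite) :
    (∀ x : X, IsCompact {y : X | s.r x y}) ∧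
    ∀ x : X, ∀ U : Set X, IsOpen U → {y : X | s.r x y} ⊆ U →
      ∃ V : Set X, IsOpen V ∧ {y : X | s.r x y} ⊆ V ∧ V ⊆ U ∧
        ∀ z : X, ({y : X | s.r z y} ∩ V).Nonempty → {y : X | s.r z y} ⊆ U := by
  have hcpt : ∀ x : X, IsCompact {y : X | s.r x y} := fun x =>
    isCompact_of_isClosed_isBounded (hclosed x) (hbdd x)
  refine ⟨hcpt, fun x U hU hAU => ?_⟩
  obtain ⟨V, hV, hAV, hVU, hsat⟩ :=
    (hcpt x).exists_isOpen_forall_subset_of_null_family (𝒟 := {A | ∃ z, A = {y | s.r z y}})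
      hU hAU (by rintro _ ⟨z, rfl⟩; exact hcpt z) hnull (by
        rintro _ ⟨z, rfl⟩ ⟨y, hzy, hxy⟩
        rwa [s.setOf_rel_eq_of_rel (s.trans hzy (s.symm hxy))])
  exact ⟨V, hV, hAV, hVU, fun z hz => hsat _ ⟨z, rfl⟩ hz⟩
end

section
/- Let D be an upper semi-continuous decomposition of a Hausdorff space X. Then the decomposition D' whose elements are the connected components of the elements of D is a monotone upper semi-continuous decomposition. -/
/-!
In a compact Hausdorff space components are intersections of clopen sets, so a component `C` of a
class `K` with `C ⊆ U` is cut off inside `K` by a relatively clopen set. This splits `K` into two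
disjoint compacta, hence `K ⊆ W₁ ∪ W₂` with `W₁, W₂` disjoint open and `C ⊆ W₁ ⊆ U`. Upper
semi-continuity of the classes gives `V ⊇ K` such that every class meeting `V` lies in `W₁ ∪ W₂`;
a component of such a class that meets `V ∩ W₁` is connected, hence lies in `W₁`.
-/

open Set

theorem IsClosed.connectedComponentIn {X : Type*} [TopologicalSpace X] {F : Set X}
    (hF : IsClosed F) (x : X) : IsClosed (connectedComponentIn F x) := by
  by_cases hx : x ∈ F
  · rw [connectedComponentIn_eq_image hx]
    exact hF.isClosedEmbedding_subtypeVal.isClosedMap _ isClosed_connectedComponent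
  · simp [connectedComponentIn_eq_empty hx]

/-- The component is the intersection of the clopen sets containing `x`, a directed family of
compact sets, so one of them already lies in `U`. -/
theorem IsOpen.exists_isClopen_of_connectedComponent_subset {K : Type*} [TopologicalSpace K]
    [CompactSpace K] [T2Space K] {x : K} {U : Set K} (hU : IsOpen U)
    (h : connectedComponent x ⊆ U) :
    ∃ Z : Set K, IsClopen Z ∧ connectedComponent x ⊆ Z ∧ Z ⊆ U := by
  let N := { Z : Set K // IsClopen Z ∧ x ∈ Z }
  have : Nonempty N := ⟨⟨univ, isClopen_univ, mem_univ x⟩⟩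
  have hdir : Directed (· ⊇ ·) fun Z : N => Z.val := by
    rintro ⟨A, hA, hxA⟩ ⟨B, hB, hxB⟩
    exact ⟨⟨A ∩ B, hA.inter hB, hxA, hxB⟩, inter_subset_left, inter_subset_right⟩
  have hnhds : ∀ y ∈ ⋂ Z : N, Z.val, U ∈ nhds y := fun y hy =>
    hU.mem_nhds (h ((connectedComponent_eq_iInter_isClopen x).symm ▸ hy))
  obtain ⟨⟨Z, hZ, hxZ⟩, hZU⟩ :=
    exists_subset_nhds_of_compactSpace hdir (fun Z : N => Z.property.1.1) hnhds
  exact ⟨Z, hZ, hZ.connectedComponent_subset hxZ, hZU⟩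

theorem IsCompact.exists_separation_of_connectedComponentIn_subset {X : Type*}
    [TopologicalSpace X] [T2Space X] {K U : Set X} (hK : IsCompact K) {x : X} (hx : x ∈ K)
    (hU : IsOpen U) (h : connectedComponentIn K x ⊆ U) :
    ∃ W₁ W₂ : Set X, IsOpen W₁ ∧ IsOpen W₂ ∧ Disjoint W₁ W₂ ∧ K ⊆ W₁ ∪ W₂ ∧
      connectedComponentIn K x ⊆ W₁ ∧ W₁ ⊆ U := by
  have : CompactSpace K := isCompact_iff_compactSpace.1 hK
  rw [connectedComponentIn_eq_image hx, image_subset_iff] at h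
  rw [connectedComponentIn_eq_image hx]
  obtain ⟨Z, hZ, hCZ, hZU⟩ :=
    (hU.preimage continuous_subtype_val).exists_isClopen_of_connectedComponent_subset h
  obtain ⟨W₁, W₂, hW₁, hW₂, hZW₁, hZcW₂, hW⟩ := SeparatedNhds.of_isCompact_isCompact
    (hZ.isClosed.isCompact.image continuous_subtype_val)
    (hZ.compl.isClosed.isCompact.image continuous_subtype_val)
    (disjoint_compl_right.image Subtype.val_injective.injOn (subset_univ _) (subset_univ _))
  rw [image_subset_iff] at hZW₁ hZcW₂
  refine ⟨W₁ ∩ U, W₂, hW₁.inter hU, hW₂, hW.mono_left inter_subset_left, ?_,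
    image_subset_iff.2 fun y hy => ⟨hZW₁ (hCZ hy), hZU (hCZ hy)⟩, inter_subset_right⟩
  intro y hy
  by_cases hyZ : (⟨y, hy⟩ : K) ∈ Z
  · exact Or.inl ⟨hZW₁ hyZ, hZU hyZ⟩
  · exact Or.inr (hZcW₂ hyZ)

theorem components_decomposition_monotone_usc_general {X : Type*} [TopologicalSpace X]
    [T2Space X] (s : Setoid X)
    (hcompact : ∀ x : X, IsCompact {y : X | s.r x y})
    (husc : ∀ x : X, ∀ U : Set X, IsOpen U → {y : X | s.r x y} ⊆ U →
      ∃ V : Set X, IsOpen V ∧ {y : X | s.r x y} ⊆ V ∧ V ⊆ U ∧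
        ∀ z : X, ({y : X | s.r z y} ∩ V).Nonempty → {y : X | s.r z y} ⊆ U) :
    (∀ x : X, IsConnected (connectedComponentIn {y : X | s.r x y} x)) ∧
    (∀ x : X, IsCompact (connectedComponentIn {y : X | s.r x y} x)) ∧
    (∀ x : X, IsClosed (connectedComponentIn {y : X | s.r x y} x)) ∧
    (∀ x : X, ∀ U : Set X, IsOpen U → connectedComponentIn {y : X | s.r x y} x ⊆ U →
      ∃ V : Set X, IsOpen V ∧ connectedComponentIn {y : X | s.r x y} x ⊆ V ∧ V ⊆ U ∧
        ∀ z : X, (connectedComponentIn {y : X | s.r z y} z ∩ V).Nonempty →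
          connectedComponentIn {y : X | s.r z y} z ⊆ U) := by
  have hclosed x := ((hcompact x).isClosed).connectedComponentIn x
  refine ⟨fun x => isConnected_connectedComponentIn_iff.2 (s.refl x),
    fun x => (hcompact x).of_isClosed_subset (hclosed x) (connectedComponentIn_subset _ _),
    hclosed, ?_⟩
  intro x U hU hxU
  obtain ⟨W₁, W₂, hW₁, hW₂, hW, hcover, hxW₁, hW₁U⟩ :=
    (hcompact x).exists_separation_of_connectedComponentIn_subset (s.refl x) hU hxU
  obtain ⟨V, hV, hxV, -, hVsat⟩ := husc x _ (hW₁.union hW₂) hcover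
  refine ⟨V ∩ W₁, hV.inter hW₁,
    subset_inter ((connectedComponentIn_subset _ _).trans hxV) hxW₁,
    inter_subset_right.trans hW₁U, fun z ⟨w, hwz, hwV, hwW₁⟩ => ?_⟩
  have hzcover := hVsat z ⟨w, connectedComponentIn_subset _ _ hwz, hwV⟩
  exact (isPreconnected_connectedComponentIn.subset_left_of_subset_union hW₁ hW₂ hW
    ((connectedComponentIn_subset _ _).trans hzcover) ⟨w, hwz, hwW₁⟩).trans hW₁U

/-- Let `s` be an upper semi-continuous decomposition of a Hausdorff space `X`.
Then the decomposition `D'` whose elements are the connected components of the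
elements of `s` (the component of `x` being `connectedComponentIn` of the class of `x`)
is a monotone upper semi-continuous decomposition: its elements are connected,
compact, closed, and satisfy the usc saturation property. -/
theorem components_decomposition_monotone_usc {X : Type*} [TopologicalSpace X]
    [T2Space X] (s : Setoid X)
    (hcompact : ∀ x : X, IsCompact {y : X | s.r x y})
    (hclosed : ∀ x : X, IsClosed {y : X | s.r x y})
    (husc : ∀ x : X, ∀ U : Set X, IsOpen U → {y : X | s.r x y} ⊆ U →
      ∃ V : Set X, IsOpen V ∧ {y : X | s.r x y} ⊆ V ∧ V ⊆ U ∧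
        ∀ z : X, ({y : X | s.r z y} ∩ V).Nonempty → {y : X | s.r z y} ⊆ U) :
    (∀ x : X, IsConnected (connectedComponentIn {y : X | s.r x y} x)) ∧
    (∀ x : X, IsCompact (connectedComponentIn {y : X | s.r x y} x)) ∧
    (∀ x : X, IsClosed (connectedComponentIn {y : X | s.r x y} x)) ∧
    (∀ x : X, ∀ U : Set X, IsOpen U → connectedComponentIn {y : X | s.r x y} x ⊆ U →
      ∃ V : Set X, IsOpen V ∧ connectedComponentIn {y : X | s.r x y} x ⊆ V ∧ V ⊆ U ∧
        ∀ z : X, (connectedComponentIn {y : X | s.r z y} z ∩ V).Nonempty →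
          connectedComponentIn {y : X | s.r z y} z ⊆ U) :=
  components_decomposition_monotone_usc_general s hcompact husc
end

section
/- For every compact metric space Y there exists a monotone upper semi-continuous decomposition of the closed 3-ball D^3 such that Y embeds into the decomposition space. -/
/-!
By the Alexandroff–Hausdorff theorem `Y` is a continuous image `σ : K → Y` of a compact
`K ⊆ [-1, 1]` (the Cantor set, or `∅` when `Y` is empty). Put one copy of `K` on each of two skew
edges of a tetrahedron in `D³` and join `a` on the first edge to `b` on the second by a straight
segment whenever `σ a = σ b`. A point on such a segment determines its height, and with it the
endpoint on the first edge or, at the top, on the second; so `σ` of the first endpoint is a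
well-defined continuous map from the union of the segments onto `Y`, whose fibre over `y` is the
convex join of two copies of `σ⁻¹ y`, hence connected. Collapsing these fibres, and nothing else,
is a monotone upper semicontinuous decomposition of `D³`, and the collapsed fibres form a closed
copy of `Y` in the decomposition space.
-/

open Set Topology Function Metric

theorem isPreconnected_convexJoin {E : Type*} [AddCommGroup E] [Module ℝ E] [TopologicalSpace E]
    [IsTopologicalAddGroup E] [ContinuousSMul ℝ E] (s t : Set E) :
    IsPreconnected (convexJoin ℝ s t) := by
  rcases s.eq_empty_or_nonempty with rfl | ⟨a₀, ha₀⟩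
  · simp only [convexJoin_empty_left, isPreconnected_empty]
  rcases t.eq_empty_or_nonempty with rfl | ⟨b₀, hb₀⟩
  · simp only [convexJoin_empty_right, isPreconnected_empty]
  refine isPreconnected_of_forall a₀ fun x hx => ?_
  obtain ⟨a, ha, b, hb, hx⟩ := mem_convexJoin.1 hx
  refine ⟨segment ℝ a b ∪ segment ℝ a b₀ ∪ segment ℝ a₀ b₀,
    union_subset (union_subset (segment_subset_convexJoin ha hb)
      (segment_subset_convexJoin ha hb₀)) (segment_subset_convexJoin ha₀ hb₀),
    Or.inr (left_mem_segment ℝ a₀ b₀), Or.inl (Or.inl hx), ?_⟩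
  exact ((convex_segment a b).isPreconnected.union a (left_mem_segment ℝ a b)
    (left_mem_segment ℝ a b₀) (convex_segment a b₀).isPreconnected).union b₀
    (Or.inr (right_mem_segment ℝ a b₀)) (right_mem_segment ℝ a₀ b₀)
    (convex_segment a₀ b₀).isPreconnected

structure Setoid.IsMonotoneUSC {X : Type*} [TopologicalSpace X] (s : Setoid X) : Prop where
  isConnected_setOf_rel : ∀ x, IsConnected {y | s.r x y}
  isCompact_setOf_rel : ∀ x, IsCompact {y | s.r x y}
  isClosedMap_mk : IsClosedMap (Quotient.mk s)

namespace Setoid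

theorem preimage_mk_image_mk_ker {α β : Type*} (f : α → β) (F : Set α) :
    Quotient.mk (ker f) ⁻¹' (Quotient.mk (ker f) '' F) = f ⁻¹' (f '' F) :=
  Set.ext fun _ => exists_congr fun _ => and_congr_right fun _ => Quotient.eq

variable {X Y : Type*} {T : Set X}

section Collapse

variable (π : T → Y)

open scoped Classical in
/-- `ker (collapse π)` is the decomposition of `X` whose nondegenerate elements are the fibres
of `π`. -/
noncomputable def collapse (x : X) : Y ⊕ X :=
  if h : x ∈ T then .inl (π ⟨x, h⟩) else .inr x

theorem collapse_coe (t : T) : collapse π t = .inl (π t) := by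
  simp [collapse]

theorem setOf_ker_collapse_rel_coe (t : T) :
    {x | (ker (collapse π)).r t x} = Subtype.val '' (π ⁻¹' {π t}) := by
  ext x
  by_cases hx : x ∈ T <;> simp [ker_def, collapse, hx, eq_comm]

theorem setOf_ker_collapse_rel_of_notMem {x : X} (hx : x ∉ T) :
    {x' | (ker (collapse π)).r x x'} = {x} := by
  ext x'
  by_cases hx' : x' ∈ T
  · simp [ker_def, collapse, hx, hx', ne_of_mem_of_not_mem hx' hx]
  · simp [ker_def, collapse, hx, hx', eq_comm]

theorem preimage_collapse_image (F : Set X) :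
    collapse π ⁻¹' (collapse π '' F) =
      F ∪ Subtype.val '' (π ⁻¹' (π '' (Subtype.val ⁻¹' F))) := by
  ext x
  by_cases hx : x ∈ T
  · simp only [collapse, mem_preimage, hx, ↓reduceDIte, mem_image, dite_eq_iff, Sum.inl.injEq,
      reduceCtorEq, exists_false, or_false, mem_union, Subtype.exists, exists_and_left,
      exists_and_right, exists_eq_right, exists_true_left, iff_or_self]
    exact fun hxF => ⟨x, hxF, hx, rfl⟩
  · simp [collapse, hx, dite_eq_iff]

end Collapse

variable [TopologicalSpace X] [TopologicalSpace Y] [T2Space X] [T2Space Y] (π : C(T, Y))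

theorem isClosedMap_mk_ker_collapse (hT : IsCompact T) :
    IsClosedMap (Quotient.mk (ker (collapse π))) := by
  intro F hF
  refine isQuotientMap_quotient_mk'.isClosed_preimage.1 ?_
  change IsClosed (Quotient.mk _ ⁻¹' _)
  rw [preimage_mk_image_mk_ker, preimage_collapse_image]
  have : CompactSpace T := isCompact_iff_compactSpace.1 hT
  have hπF : IsClosed (π '' (Subtype.val ⁻¹' F)) :=
    ((hF.preimage continuous_subtype_val).isCompact.image π.continuous).isClosed
  exact hF.union ((hπF.preimage π.continuous).isCompact.image continuous_subtype_val).isClosed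

theorem isMonotoneUSC_ker_collapse (hT : IsCompact T)
    (hfib : ∀ y, IsConnected (Subtype.val '' (π ⁻¹' {y}))) :
    (ker (collapse π)).IsMonotoneUSC := by
  have : CompactSpace T := isCompact_iff_compactSpace.1 hT
  refine ⟨fun x => ?_, fun x => ?_, isClosedMap_mk_ker_collapse π hT⟩
  · by_cases hx : x ∈ T
    · exact (setOf_ker_collapse_rel_coe π ⟨x, hx⟩).symm ▸ hfib _
    · exact setOf_ker_collapse_rel_of_notMem π hx ▸ isConnected_singleton
  · by_cases hx : x ∈ T
    · exact (setOf_ker_collapse_rel_coe π ⟨x, hx⟩).symm ▸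
        (isClosed_singleton.preimage π.continuous).isCompact.image continuous_subtype_val
    · exact setOf_ker_collapse_rel_of_notMem π hx ▸ isCompact_singleton

theorem exists_isEmbedding_quotient_ker_collapse (hT : IsCompact T) (hsurj : Surjective π) :
    ∃ f : Y → Quotient (ker (collapse π)), IsEmbedding f := by
  have : CompactSpace T := isCompact_iff_compactSpace.1 hT
  have hq := IsQuotientMap.of_surjective_continuous hsurj π.continuous
  let g : C(T, Quotient (ker (collapse π))) :=
    ⟨Quotient.mk _ ∘ Subtype.val, continuous_quotient_mk'.comp continuous_subtype_val⟩
  have hg : FactorsThrough g π := fun t t' h =>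
    Quotient.sound (show collapse π t = collapse π t' by rw [collapse_coe, collapse_coe, h])
  set f := hq.lift g hg
  have hfπ : ∀ t, f (π t) = Quotient.mk (ker (collapse π)) t :=
    DFunLike.congr_fun (hq.lift_comp g hg)
  have hinj : Injective f := hsurj.forall₂.2 fun t t' h => by
    rw [hfπ, hfπ, Quotient.eq, ker_def, collapse_coe, collapse_coe] at h
    exact Sum.inl_injective h
  have hclosed : IsClosedMap f := fun C hC => by
    rw [← image_preimage_eq C hsurj, image_image, funext hfπ, ← image_image]
    exact isClosedMap_mk_ker_collapse π hT _
      (hT.isClosed.isClosedMap_subtype_val _ (hC.preimage π.continuous))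
  exact ⟨f, (IsClosedEmbedding.of_continuous_injective_isClosedMap f.continuous hinj
    hclosed).isEmbedding⟩

end Setoid

theorem exists_isMonotoneUSC_isEmbedding_of_factorsThrough {W X Y : Type*} [TopologicalSpace W]
    [CompactSpace W] [TopologicalSpace X] [T2Space X] [TopologicalSpace Y] [T2Space Y]
    (Ψ : C(W, X)) (ρ : C(W, Y)) (hρΨ : FactorsThrough ρ Ψ)
    (hfib : ∀ y, IsConnected (Ψ '' (ρ ⁻¹' {y}))) :
    ∃ s : Setoid X, s.IsMonotoneUSC ∧ ∃ f : Y → Quotient s, IsEmbedding f := by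
  let q : C(W, range Ψ) := ⟨rangeFactorization Ψ, Ψ.continuous.rangeFactorization⟩
  have hq : IsQuotientMap q :=
    .of_surjective_continuous rangeFactorization_surjective q.continuous
  have hρq : FactorsThrough ρ q := fun w w' h => hρΨ (congrArg Subtype.val h)
  let π := hq.lift ρ hρq
  have hπq : ∀ w, π (q w) = ρ w := DFunLike.congr_fun (hq.lift_comp ρ hρq)
  have hπfib : ∀ y, Subtype.val '' (π ⁻¹' {y}) = Ψ '' (ρ ⁻¹' {y}) := fun y => by
    rw [← hq.surjective.image_preimage (π ⁻¹' {y}), image_image, ← preimage_comp]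
    simp only [comp_def, hπq]
    rfl
  have hsurj : Surjective π := fun y => by
    obtain ⟨_, w, hw, -⟩ := (hfib y).nonempty
    exact ⟨q w, (hπq w).trans hw⟩
  have hT : IsCompact (range Ψ) := isCompact_range Ψ.continuous
  exact ⟨_, Setoid.isMonotoneUSC_ker_collapse π hT (by simpa only [hπfib] using hfib),
    Setoid.exists_isEmbedding_quotient_ker_collapse π hT hsurj⟩

noncomputable def lowerEdge (s : ℝ) : EuclideanSpace ℝ (Fin 3) :=
  (s / 2) • EuclideanSpace.single 0 1

noncomputable def upperEdge (s : ℝ) : EuclideanSpace ℝ (Fin 3) :=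
  (s / 2) • EuclideanSpace.single 1 1 + (1 / 2 : ℝ) • EuclideanSpace.single 2 1

@[fun_prop]
theorem continuous_lowerEdge : Continuous lowerEdge := by unfold lowerEdge; fun_prop
@[fun_prop]
theorem continuous_upperEdge : Continuous upperEdge := by unfold upperEdge; fun_prop

theorem lineMap_lowerEdge_upperEdge (a b l : ℝ) :
    AffineMap.lineMap (lowerEdge a) (upperEdge b) l = !₂[(1 - l) * a / 2, l * b / 2, l / 2] := by
  ext i
  fin_cases i <;> simp [AffineMap.lineMap_apply_module, lowerEdge, upperEdge] <;> ring

theorem lowerEdge_mem_closedBall {s : ℝ} (hs : |s| ≤ 1) : lowerEdge s ∈ closedBall 0 1 := by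
  rw [mem_closedBall_zero_iff, lowerEdge, norm_smul]
  simp only [norm_div, Real.norm_eq_abs, PiLp.norm_single, norm_one, mul_one]
  linarith

theorem upperEdge_mem_closedBall {s : ℝ} (hs : |s| ≤ 1) : upperEdge s ∈ closedBall 0 1 := by
  rw [mem_closedBall_zero_iff]
  refine (norm_add_le _ _).trans ?_
  simp only [norm_smul, norm_div, Real.norm_eq_abs, PiLp.norm_single, norm_one,
    mul_one, one_div, norm_inv]
  linarith

theorem eq_of_lineMap_lowerEdge_upperEdge_eq {a b l a' b' l' : ℝ}
    (h : AffineMap.lineMap (lowerEdge a) (upperEdge b) l =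
      AffineMap.lineMap (lowerEdge a') (upperEdge b') l') :
    l = l' ∧ (l ≠ 1 → a = a') ∧ (l ≠ 0 → b = b') := by
  simp only [lineMap_lowerEdge_upperEdge] at h
  have h0 := congrArg (· 0) h
  have h1 := congrArg (· 1) h
  have h2 := congrArg (· 2) h
  simp only [Fin.isValue, Matrix.cons_val_zero, ne_eq, OfNat.ofNat_ne_zero, not_false_eq_true,
    div_left_inj', Matrix.cons_val_one, Matrix.cons_val] at h0 h1 h2
  obtain rfl := h2
  refine ⟨rfl, fun hl => ?_, fun hl => ?_⟩
  · exact mul_left_cancel₀ (sub_ne_zero.2 hl.symm) (by linarith)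
  · exact mul_left_cancel₀ hl (by linarith)

theorem apply_eq_of_lineMap_lowerEdge_upperEdge_eq {α β : Type*} {e : α → ℝ} (he : Injective e)
    {σ : α → β} {a b a' b' : α} {l l' : ℝ} (hab : σ a = σ b) (hab' : σ a' = σ b')
    (h : AffineMap.lineMap (lowerEdge (e a)) (upperEdge (e b)) l =
      AffineMap.lineMap (lowerEdge (e a')) (upperEdge (e b')) l') :
    σ a = σ a' := by
  obtain ⟨-, ha, hb⟩ := eq_of_lineMap_lowerEdge_upperEdge_eq h
  by_cases hl : l = 1
  · rw [hab, he (hb (by simp [hl])), hab']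
  · rw [he (ha hl)]

theorem exists_isMonotoneUSC_closedBall_isEmbedding {Y : Type*} [TopologicalSpace Y]
    [T2Space Y] {K : Set ℝ} (hK : IsCompact K) (hKball : K ⊆ closedBall 0 1) (σ : C(K, Y))
    (hσ : Surjective σ) :
    ∃ s : Setoid (closedBall (0 : EuclideanSpace ℝ (Fin 3)) 1), s.IsMonotoneUSC ∧
      ∃ f : Y → Quotient s, IsEmbedding f := by
  have : CompactSpace K := isCompact_iff_compactSpace.1 hK
  have habs : ∀ a : K, |(a : ℝ)| ≤ 1 := fun a => mem_closedBall_zero_iff.1 (hKball a.2)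
  let W : Set (K × K × unitInterval) := {p | σ p.1 = σ p.2.1}
  have : CompactSpace W :=
    isCompact_iff_compactSpace.1 (isClosed_eq (by fun_prop) (by fun_prop)).isCompact
  let Ψ : C(W, closedBall (0 : EuclideanSpace ℝ (Fin 3)) 1) :=
    ⟨fun p => ⟨AffineMap.lineMap (lowerEdge p.1.1) (upperEdge p.1.2.1) (p.1.2.2 : ℝ),
      (convex_closedBall 0 1).lineMap_mem (lowerEdge_mem_closedBall (habs _))
        (upperEdge_mem_closedBall (habs _)) p.1.2.2.2⟩, by fun_prop⟩
  let ρ : C(W, Y) := ⟨fun p => σ p.1.1, by fun_prop⟩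
  refine exists_isMonotoneUSC_isEmbedding_of_factorsThrough Ψ ρ ?_ fun y => ?_
  · rintro ⟨⟨a, b, l⟩, hab⟩ ⟨⟨a', b', l'⟩, hab'⟩ h
    exact apply_eq_of_lineMap_lowerEdge_upperEdge_eq Subtype.val_injective hab hab'
      (congrArg Subtype.val h)
  · obtain ⟨a, rfl⟩ := hσ y
    refine ⟨⟨Ψ ⟨(a, a, 0), rfl⟩, mem_image_of_mem _ rfl⟩, ?_⟩
    rw [← IsInducing.subtypeVal.isPreconnected_image]
    convert isPreconnected_convexJoin (lowerEdge '' (Subtype.val '' (σ ⁻¹' {σ a})))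
      (upperEdge '' (Subtype.val '' (σ ⁻¹' {σ a})))
    ext x
    simp only [mem_image, mem_convexJoin, segment_eq_image_lineMap]
    constructor
    · rintro ⟨_, ⟨⟨⟨b, c, l⟩, hbc⟩, hb, rfl⟩, rfl⟩
      exact ⟨_, ⟨_, ⟨b, hb, rfl⟩, rfl⟩, _, ⟨_, ⟨c, hbc.symm.trans hb, rfl⟩, rfl⟩,
        l, l.2, rfl⟩
    · rintro ⟨_, ⟨_, ⟨b, hb, rfl⟩, rfl⟩, _, ⟨_, ⟨c, hc, rfl⟩, rfl⟩, l, hl, rfl⟩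
      exact ⟨_, ⟨⟨(b, c, ⟨l, hl⟩), hb.trans hc.symm⟩, hb, rfl⟩, rfl⟩

theorem exists_isCompact_subset_closedBall_surjective_continuousMap (Y : Type*)
    [MetricSpace Y] [CompactSpace Y] :
    ∃ K : Set ℝ, IsCompact K ∧ K ⊆ closedBall 0 1 ∧ ∃ σ : C(K, Y), Surjective σ := by
  rcases isEmpty_or_nonempty Y with _ | _
  · exact ⟨∅, isCompact_empty, empty_subset _, ⟨isEmptyElim, continuous_of_discreteTopology⟩,
      isEmptyElim⟩
  · obtain ⟨g, hg, hgs⟩ := exists_nat_bool_continuous_surjective_of_compact Y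
    refine ⟨cantorSet, isCompact_cantorSet, ?_, ⟨g ∘ cantorSetHomeomorphNatToBool,
      hg.comp cantorSetHomeomorphNatToBool.continuous⟩,
      hgs.comp cantorSetHomeomorphNatToBool.surjective⟩
    rw [Real.closedBall_eq_Icc]
    exact cantorSet_subset_unitInterval.trans (Icc_subset_Icc (by norm_num) (by norm_num))

/-- For every compact metric space `Y` there exists a monotone upper semi-continuous
decomposition of the closed 3-ball (all elements connected and compact, and the
quotient map closed) such that `Y` embeds into the decomposition space. -/
theorem exists_monotone_usc_decomposition_embedding (Y : Type) [MetricSpace Y]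
    [CompactSpace Y] :
    ∃ s : Setoid (Metric.closedBall (0 : EuclideanSpace ℝ (Fin 3)) 1),
      (∀ x, IsConnected {y | s.r x y}) ∧
      (∀ x, IsCompact {y | s.r x y}) ∧
      IsClosedMap (Quotient.mk s) ∧
      ∃ f : Y → Quotient s, Topology.IsEmbedding f := by
  obtain ⟨K, hK, hKball, σ, hσ⟩ :=
    exists_isCompact_subset_closedBall_surjective_continuousMap Y
  obtain ⟨s, hs, f, hf⟩ := exists_isMonotoneUSC_closedBall_isEmbedding hK hKball σ hσ
  exact ⟨s, hs.isConnected_setOf_rel, hs.isCompact_setOf_rel, hs.isClosedMap_mk, f, hf⟩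
end

section
/- If C is a compact cell-like set in a metric space X and e: C → Y is an embedding into an absolute neighborhood retract Y, then e(C) is cell-like in Y. -/
universe u

/-- A compact subset `C` of a topological space is *cell-like* if for every neighborhood
`U` of `C` there is a neighborhood `V ⊆ U` of `C` such that the inclusion `V → U` is
null-homotopic in `U`. -/
def CellLike {X : Type*} [TopologicalSpace X] (C : Set X) : Prop :=
  IsCompact C ∧ ∀ U : Set X, IsOpen U → C ⊆ U →
    ∃ V : Set X, IsOpen V ∧ C ⊆ V ∧ ∃ hVU : V ⊆ U, ∃ c : U,
      ContinuousMap.Homotopic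
        ⟨Set.inclusion hVU, continuous_inclusion hVU⟩
        (ContinuousMap.const V c)

/-- A metric space `Y` is an *absolute neighborhood retract* if for every metric space
`Z`, closed subset `A ⊆ Z` and continuous map `f : A → Y`, `f` extends continuously
over some neighborhood of `A` in `Z`. -/
def IsANR (Y : Type u) [MetricSpace Y] : Prop :=
  ∀ (Z : Type u) (_ : MetricSpace Z) (A : Set Z), IsClosed A → ∀ f : C(A, Y),
    ∃ U : Set Z, IsOpen U ∧ A ⊆ U ∧ ∃ g : C(U, Y),
      ∀ (a : Z) (ha : a ∈ A) (haU : a ∈ U), g ⟨a, haU⟩ = f ⟨a, ha⟩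

/-! Extend `e` to a map `g` on a neighbourhood `W` of `C`, using that `Y` is an ANR. For an open
`U ⊇ e(C)`, pushing a null-homotopy of `C` inside `W ∩ g⁻¹(U)` forward by `g` contracts `e(C)`
in `U`. This contraction, the identity at time `0` and the constant at time `1` form a map on the
closed set `I × e(C) ∪ {0, 1} × Y` of `I × Y`; being an ANR, `Y` lets it extend over a
neighbourhood of that set, which by the tube lemma contains some `I × V` with `V ⊇ e(C)` open.
The extension on `I × V` contracts `V` in `U`. -/

open Set unitInterval

theorem CellLike.nonempty {X : Type*} [TopologicalSpace X] {C : Set X} (hC : CellLike C) :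
    C.Nonempty := by
  by_contra h
  obtain ⟨-, -, -, -, c, -⟩ := hC.2 ∅ isOpen_empty (not_nonempty_iff_eq_empty.mp h).subset
  exact c.2

theorem CellLike.nullhomotopic_inclusion {X : Type*} [TopologicalSpace X] {C U : Set X}
    (hC : CellLike C) (hU : IsOpen U) (hCU : C ⊆ U) :
    (ContinuousMap.inclusion hCU).Nullhomotopic := by
  obtain ⟨V, -, hCV, hVU, c, hH⟩ := hC.2 U hU hCU
  exact ContinuousMap.Nullhomotopic.comp_left ⟨c, hH⟩ (ContinuousMap.inclusion hCV)

theorem CellLike.nullhomotopic_of_continuousOn {X Y : Type*} [TopologicalSpace X]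
    [TopologicalSpace Y] {C W : Set X} {U : Set Y} {g : X → Y} (hC : CellLike C)
    (hW : IsOpen W) (hCW : C ⊆ W) (hg : ContinuousOn g W) (hU : IsOpen U) (f : C(C, U))
    (hfg : ∀ x : C, (f x : Y) = g x) : f.Nullhomotopic := by
  have hCW' : C ⊆ W ∩ g ⁻¹' U := fun x hx =>
    ⟨hCW hx, by rw [mem_preimage, ← hfg ⟨x, hx⟩]; exact (f _).2⟩
  let φ : C(↥(W ∩ g ⁻¹' U), U) :=
    ⟨fun w => ⟨g w, w.2.2⟩, (hg.mono inter_subset_left).domRestrict.subtype_mk _⟩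
  have hf : f = φ.comp (ContinuousMap.inclusion hCW') := by ext x; exact hfg x
  rw [hf]
  exact (hC.nullhomotopic_inclusion (hg.isOpen_inter_preimage hW hU) hCW').comp_right φ

theorem IsANR.exists_continuousOn_extension {Y : Type u} [MetricSpace Y] [Nonempty Y]
    (hY : IsANR Y) {Z : Type u} [MetricSpace Z] {A : Set Z} (hA : IsClosed A) (f : C(A, Y)) :
    ∃ O : Set Z, IsOpen O ∧ A ⊆ O ∧ ∃ g : Z → Y, ContinuousOn g O ∧ ∀ a : A, g a = f a := by
  obtain ⟨O, hO, hAO, g, hg⟩ := hY Z inferInstance A hA f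
  let g' : Z → Y := Function.extend Subtype.val g fun _ => Classical.arbitrary Y
  have hg' : ∀ z : O, g' z = g z := Subtype.val_injective.extend_apply _ _
  refine ⟨O, hO, hAO, g', ?_, fun a => (hg' ⟨a, hAO a.2⟩).trans (hg a a.2 _)⟩
  rw [continuousOn_iff_continuous_domRestrict]
  exact g.continuous.congr fun z => (hg' z).symm

theorem nullhomotopic_inclusion_of_continuousOn {Y : Type*} [TopologicalSpace Y]
    {V U : Set Y} (hVU : V ⊆ U) {F : I × Y → Y} {c : U} (hF : ContinuousOn F (univ ×ˢ V))
    (hFU : ∀ t, ∀ y ∈ V, F (t, y) ∈ U) (hF0 : ∀ y ∈ V, F (0, y) = y)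
    (hF1 : ∀ y ∈ V, F (1, y) = c) : (ContinuousMap.inclusion hVU).Nullhomotopic := by
  refine ⟨c, ⟨
    { toFun p := ⟨F (p.1, p.2), hFU p.1 p.2 p.2.2⟩
      continuous_toFun := ?_
      map_zero_left y := Subtype.ext (hF0 y y.2)
      map_one_left y := Subtype.ext (hF1 y y.2) }⟩⟩
  refine Continuous.subtype_mk (hF.comp_continuous ?_ fun p => ⟨mem_univ _, p.2.2⟩) _
  fun_prop

theorem exists_continuousOn_of_homotopy {Y : Type*} [TopologicalSpace Y] {K U : Set Y}
    (hK : IsClosed K) {hKU : K ⊆ U} {c : U}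
    (H : ContinuousMap.Homotopy (ContinuousMap.inclusion hKU) (ContinuousMap.const K c)) :
    ∃ G : I × Y → Y, ContinuousOn G (univ ×ˢ K ∪ ({0} ×ˢ univ ∪ {1} ×ˢ univ)) ∧
      (∀ y, G (0, y) = y) ∧ (∀ y, G (1, y) = c) ∧ ∀ t, ∀ y ∈ K, G (t, y) ∈ U := by
  classical
  let G : I × Y → Y := fun p =>
    if p.1 = 0 then p.2 else if h : p.2 ∈ K then H (p.1, ⟨p.2, h⟩) else c
  have hGK : ∀ p : I × Y, ∀ h : p.2 ∈ K, G p = H (p.1, ⟨p.2, h⟩) := by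
    rintro ⟨t, y⟩ h
    by_cases ht : t = 0
    · subst ht
      simp only [G, if_pos rfl, ContinuousMap.Homotopy.apply_zero]
      rfl
    · simp [G, ht, h]
  have hG1 : ∀ y, G (1, y) = c := by
    intro y
    by_cases h : y ∈ K <;> simp [G, h]
  refine ⟨G, ?_, fun y => if_pos rfl, hG1, fun t y hy => by rw [hGK (t, y) hy]; exact (H _).2⟩
  refine .union_of_isClosed ?_ (.union_of_isClosed ?_ ?_ ?_ ?_) (isClosed_univ.prod hK) ?_
  · rw [continuousOn_iff_continuous_domRestrict]
    refine Continuous.congr ?_ fun p => (hGK p.1 p.2.2).symm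
    fun_prop
  · exact continuousOn_snd.congr fun p hp => if_pos hp.1
  · exact (continuousOn_const (c := (c : Y))).congr fun p hp => by rw [← hG1 p.2, ← hp.1]
  · exact isClosed_singleton.prod isClosed_univ
  · exact isClosed_singleton.prod isClosed_univ
  · exact (isClosed_singleton.prod isClosed_univ).union (isClosed_singleton.prod isClosed_univ)

theorem IsANR.exists_nhds_nullhomotopic_inclusion {Y : Type u} [MetricSpace Y] (hY : IsANR Y)
    {K U : Set Y} (hK : IsCompact K) (hU : IsOpen U) (hKU : K ⊆ U)
    (h : (ContinuousMap.inclusion hKU).Nullhomotopic) :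
    ∃ V : Set Y, IsOpen V ∧ K ⊆ V ∧
      ∃ hVU : V ⊆ U, (ContinuousMap.inclusion hVU).Nullhomotopic := by
  obtain ⟨c, ⟨H⟩⟩ := h
  have : Nonempty Y := ⟨c⟩
  obtain ⟨G, hG, hG0, hG1, hGU⟩ := exists_continuousOn_of_homotopy hK.isClosed H
  have hA : IsClosed (univ ×ˢ K ∪ ({(0 : I)} ×ˢ univ ∪ {1} ×ˢ univ)) :=
    (isClosed_univ.prod hK.isClosed).union
      ((isClosed_singleton.prod isClosed_univ).union (isClosed_singleton.prod isClosed_univ))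
  obtain ⟨O, hO, hAO, G', hG', hG'G⟩ := hY.exists_continuousOn_extension hA ⟨_, hG.domRestrict⟩
  have hGK : univ ×ˢ K ⊆ O ∩ G' ⁻¹' U := fun p hp =>
    ⟨hAO (.inl hp), by rw [mem_preimage, hG'G ⟨p, .inl hp⟩]; exact hGU p.1 p.2 hp.2⟩
  obtain ⟨T, V, -, hV, hIT, hKV, hTV⟩ :=
    generalized_tube_lemma isCompact_univ hK (hG'.isOpen_inter_preimage hO hU) hGK
  have hV' : ∀ t, ∀ y ∈ V, (t, y) ∈ O ∩ G' ⁻¹' U := fun t y hy => hTV ⟨hIT (mem_univ t), hy⟩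
  have hG'0 : ∀ y, G' (0, y) = y := fun y =>
    (hG'G ⟨(0, y), .inr (.inl ⟨rfl, mem_univ y⟩)⟩).trans (hG0 y)
  have hG'1 : ∀ y, G' (1, y) = c := fun y =>
    (hG'G ⟨(1, y), .inr (.inr ⟨rfl, mem_univ y⟩)⟩).trans (hG1 y)
  have hVU : V ⊆ U := fun y hy => hG'0 y ▸ (hV' 0 y hy).2
  exact ⟨V, hV, hKV, hVU, nullhomotopic_inclusion_of_continuousOn hVU
    (hG'.mono fun p hp => (hV' p.1 p.2 hp.2).1) (fun t y hy => (hV' t y hy).2)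
    (fun y _ => hG'0 y) (fun y _ => hG'1 y)⟩

/-- If `C` is a compact cell-like set in a metric space `X` and `e : C → Y` is an
embedding into an ANR `Y`, then the image `e(C)` is cell-like in `Y`. -/
theorem cellLike_image_in_ANR {X Y : Type u} [MetricSpace X] [MetricSpace Y]
    {C : Set X} (hC : CellLike C) (hY : IsANR Y)
    (e : C → Y) (he : Topology.IsEmbedding e) :
    CellLike (Set.range e) := by
  have : CompactSpace C := isCompact_iff_compactSpace.mp hC.1
  have : Nonempty Y := ⟨e ⟨_, hC.nonempty.some_mem⟩⟩
  obtain ⟨W, hW, hCW, g, hg, hge⟩ :=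
    hY.exists_continuousOn_extension hC.1.isClosed ⟨e, he.continuous⟩
  have hK : IsCompact (range e) := isCompact_range he.continuous
  refine ⟨hK, fun U hU hKU => hY.exists_nhds_nullhomotopic_inclusion hK hU hKU ?_⟩
  let f : C(C, U) := ⟨fun x => ⟨e x, hKU ⟨x, rfl⟩⟩, he.continuous.subtype_mk _⟩
  have hf : f.Nullhomotopic :=
    hC.nullhomotopic_of_continuousOn hW hCW hg hU f fun x => (hge x).symm
  convert hf.comp_left (he.toHomeomorph.symm : C(range e, C))
  ext y
  exact (congrArg Subtype.val (he.toHomeomorph.apply_symm_apply y)).symm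
end

section
/- Let X be a regular space and D a shrinkable upper semi-continuous decomposition of X. If every point of X has arbitrarily small neighborhoods satisfying a fixed topological property P (i.e., every neighborhood of every point contains a neighborhood with property P), then every decomposition element of D has arbitrarily small neighborhoods satisfying P. -/
/-!
Pass to the quotient `π : X → X/s`. Since `π` is closed with compact fibres and `X` is regular,
the class `π x` has arbitrarily small open neighbourhoods `T₃ ⋐ T₂ ⋐ T₁ ⋐ T₀` with
`π⁻¹ T₀ ⊆ W`. Take a shrinking homeomorphism `h` for the saturated cover pulled back from
`{T₂, T₀ \ cl T₃, (cl T₁)ᶜ}` and the cover by open sets with property `P` that lie in `π⁻¹ T₁` or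
miss `π⁻¹ (cl T₂)`. Closeness to the identity forces `h x ∈ π⁻¹ T₂`, so the set
`V ⊇ h(π⁻¹ (π x))` lies in `π⁻¹ T₁`, and then `h⁻¹ V ⊆ π⁻¹ T₀ ⊆ W`; it has property `P` because `P` is invariant.
-/

open Set

section ClosedMap

variable {X Y : Type*} [TopologicalSpace X] [TopologicalSpace Y] {f : X → Y}

lemma IsClosedMap.exists_isOpen_preimage_subset (hf : IsClosedMap f) {y : Y} {W : Set X}
    (hW : IsOpen W) (hyW : f ⁻¹' {y} ⊆ W) : ∃ T, IsOpen T ∧ y ∈ T ∧ f ⁻¹' T ⊆ W := by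
  obtain ⟨N, hN, hNW⟩ := Filter.mem_comap.1 (hf.comap_nhds_le (hW.mem_nhdsSet.2 hyW))
  obtain ⟨T, hTN, hT, hyT⟩ := mem_nhds_iff.1 hN
  exact ⟨T, hT, hyT, (preimage_mono hTN).trans hNW⟩

lemma IsClosedMap.exists_isOpen_closure_subset [RegularSpace X] (hf : IsClosedMap f)
    (hcont : Continuous f) (hsurj : Function.Surjective f) {y : Y} (hy : IsCompact (f ⁻¹' {y}))
    {T : Set Y} (hT : IsOpen T) (hyT : y ∈ T) : ∃ T', IsOpen T' ∧ y ∈ T' ∧ closure T' ⊆ T := by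
  obtain ⟨G, hG, hyG, hGT⟩ :=
    hy.exists_isOpen_closure_subset
      ((hT.preimage hcont).mem_nhdsSet.2 (preimage_mono (singleton_subset_iff.2 hyT)))
  obtain ⟨T', hT', hyT', hT'G⟩ := hf.exists_isOpen_preimage_subset hG hyG
  refine ⟨T', hT', hyT', ?_⟩
  calc closure T' = f '' closure (f ⁻¹' T') := by
        rw [← hf.closure_image_eq_of_continuous hcont, image_preimage_eq _ hsurj]
    _ ⊆ f '' (f ⁻¹' T) := image_mono ((closure_mono hT'G).trans hGT)
    _ ⊆ T := image_preimage_subset f T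

end ClosedMap

lemma preimage_subset_preimage_of_exists_mem_mem {α β : Type*} {f g : α → β} {𝒯 : Set (Set β)}
    (hfg : ∀ a, ∃ T ∈ 𝒯, f a ∈ T ∧ g a ∈ T) {A B : Set β}
    (hAB : ∀ T ∈ 𝒯, T ⊆ B ∨ Disjoint T A) : f ⁻¹' A ⊆ g ⁻¹' B := by
  intro a ha
  obtain ⟨T, hT, hfT, hgT⟩ := hfg a
  rcases hAB T hT with hTB | hTA
  · exact hTB hgT
  · exact absurd ha (hTA.notMem_of_mem_left hfT)

lemma sUnion_isOpen_subset_or_subset_eq_univ {X : Type*} [TopologicalSpace X] {P : Set X → Prop}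
    (hsmall : ∀ x : X, ∀ U : Set X, IsOpen U → x ∈ U → ∃ N : Set X, IsOpen N ∧ x ∈ N ∧ N ⊆ U ∧ P N)
    {A B : Set X} (hA : IsOpen A) (hB : IsOpen B) (hAB : A ∪ B = univ) :
    ⋃₀ {V | IsOpen V ∧ P V ∧ (V ⊆ A ∨ V ⊆ B)} = univ := by
  refine eq_univ_of_forall fun x => ?_
  rcases (hAB ▸ mem_univ x : x ∈ A ∪ B) with hx | hx
  · obtain ⟨N, hN, hxN, hNA, hPN⟩ := hsmall x A hA hx
    exact ⟨N, ⟨hN, hPN, .inl hNA⟩, hxN⟩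
  · obtain ⟨N, hN, hxN, hNB, hPN⟩ := hsmall x B hB hx
    exact ⟨N, ⟨hN, hPN, .inr hNB⟩, hxN⟩

lemma Setoid.preimage_quotientMk_singleton {X : Type*} {s : Setoid X} (x : X) :
    Quotient.mk s ⁻¹' {Quotient.mk s x} = {y | s.r x y} := by
  ext y
  simp [Quotient.eq, Setoid.comm']

section Shrinkable

variable {X : Type*} [TopologicalSpace X] {s : Setoid X}

variable (s) in
def IsShrinkable : Prop :=
  ∀ 𝒱 𝒰 : Set (Set X),
    (∀ V ∈ 𝒱, IsOpen V) → ⋃₀ 𝒱 = univ →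
    (∀ U ∈ 𝒰, IsOpen U) → ⋃₀ 𝒰 = univ →
    (∀ U ∈ 𝒰, ∀ x ∈ U, {y : X | s.r x y} ⊆ U) →
    ∃ h : X ≃ₜ X,
      (∀ x : X, ∃ V ∈ 𝒱, h '' {y : X | s.r x y} ⊆ V) ∧
      (∀ x : X, ∃ U ∈ 𝒰, x ∈ U ∧ h x ∈ U)

lemma IsShrinkable.exists_homeomorph (hs : IsShrinkable s) {𝒱 : Set (Set X)}
    (h𝒱o : ∀ V ∈ 𝒱, IsOpen V) (h𝒱 : ⋃₀ 𝒱 = univ) {𝒯 : Set (Set (Quotient s))}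
    (h𝒯o : ∀ T ∈ 𝒯, IsOpen T) (h𝒯 : ⋃₀ 𝒯 = univ) :
    ∃ h : X ≃ₜ X, (∀ x, ∃ V ∈ 𝒱, h '' {y | s.r x y} ⊆ V) ∧
      ∀ x, ∃ T ∈ 𝒯, Quotient.mk s x ∈ T ∧ Quotient.mk s (h x) ∈ T := by
  obtain ⟨h, hV, hU⟩ := hs 𝒱 (preimage (Quotient.mk s) '' 𝒯) h𝒱o h𝒱
    (by rintro _ ⟨T, hT, rfl⟩; exact (h𝒯o T hT).preimage continuous_quotient_mk')
    (by rw [sUnion_image, ← preimage_iUnion₂, ← sUnion_eq_biUnion, h𝒯, preimage_univ])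
    (by rintro _ ⟨T, -, rfl⟩ x hx y hxy; rwa [mem_preimage, ← Quotient.sound hxy])
  refine ⟨h, hV, fun x => ?_⟩
  obtain ⟨_, ⟨T, hT, rfl⟩, hxT, hhxT⟩ := hU x
  exact ⟨T, hT, hxT, hhxT⟩

lemma IsShrinkable.exists_isOpen_subset_preimage (hs : IsShrinkable s) {P : Set X → Prop}
    (hP : ∀ (h : X ≃ₜ X) (A : Set X), P A → P (h ⁻¹' A))
    (hsmall : ∀ x : X, ∀ U : Set X, IsOpen U → x ∈ U → ∃ N : Set X, IsOpen N ∧ x ∈ N ∧ N ⊆ U ∧ P N)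
    {T₀ T₁ T₂ T₃ : Set (Quotient s)} (hT₀ : IsOpen T₀) (hT₁ : IsOpen T₁) (hT₂ : IsOpen T₂)
    (h₁₀ : closure T₁ ⊆ T₀) (h₂₁ : closure T₂ ⊆ T₁) (h₃₂ : closure T₃ ⊆ T₂) {x : X}
    (hx : Quotient.mk s x ∈ T₃) :
    ∃ N, IsOpen N ∧ {y | s.r x y} ⊆ N ∧ N ⊆ Quotient.mk s ⁻¹' T₀ ∧ P N := by
  have hT₂₀ : T₂ ⊆ T₀ := (subset_closure.trans h₂₁).trans (subset_closure.trans h₁₀)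
  have hT₃₁ : T₃ ⊆ closure T₁ := (subset_closure.trans h₃₂).trans (subset_closure.trans h₂₁)
    |>.trans subset_closure
  let 𝒯 : Set (Set (Quotient s)) := {T₂, T₀ \ closure T₃, (closure T₁)ᶜ}
  have h𝒯o : ∀ T ∈ 𝒯, IsOpen T := by
    rintro _ (rfl | rfl | rfl)
    exacts [hT₂, hT₀.sdiff isClosed_closure, isClosed_closure.isOpen_compl]
  have h𝒯 : ⋃₀ 𝒯 = univ := by
    refine eq_univ_of_forall fun y => ?_
    by_cases hy₁ : y ∈ closure T₁
    · by_cases hy₃ : y ∈ closure T₃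
      · exact ⟨T₂, .inl rfl, h₃₂ hy₃⟩
      · exact ⟨T₀ \ closure T₃, .inr (.inl rfl), h₁₀ hy₁, hy₃⟩
    · exact ⟨(closure T₁)ᶜ, .inr (.inr rfl), hy₁⟩
  have hcont := continuous_quotient_mk' (s := s)
  obtain ⟨h, h𝒱, h𝒯h⟩ := hs.exists_homeomorph (fun V hV => hV.1)
    (sUnion_isOpen_subset_or_subset_eq_univ hsmall (hT₁.preimage hcont)
      (isClosed_closure.preimage hcont).isOpen_compl
      (eq_univ_of_forall fun y => or_iff_not_imp_right.2 fun hy => h₂₁ (not_not.1 hy)))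
    h𝒯o h𝒯
  -- `x` and `h x` share a member of `𝒯`, and `T₂` is the only member meeting `T₃`.
  have hhx : Quotient.mk s (h x) ∈ T₂ := by
    refine preimage_subset_preimage_of_exists_mem_mem h𝒯h (A := T₃) ?_ hx
    rintro _ (rfl | rfl | rfl)
    exacts [.inl subset_rfl, .inr (disjoint_sdiff_left.mono_right subset_closure),
      .inr (disjoint_compl_left.mono_right hT₃₁)]
  obtain ⟨V, ⟨hV, hPV, hVT₁ | hVT₂⟩, hDV⟩ := h𝒱 x
  · refine ⟨h ⁻¹' V, hV.preimage h.continuous, image_subset_iff.1 hDV, ?_, hP h V hPV⟩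
    refine (preimage_mono hVT₁).trans <| preimage_subset_preimage_of_exists_mem_mem
      (fun y => (h𝒯h y).imp fun _ => .imp_right .symm) (A := T₁) ?_
    rintro _ (rfl | rfl | rfl)
    exacts [.inl hT₂₀, .inl sdiff_subset, .inr (disjoint_compl_left.mono_right subset_closure)]
  · exact absurd (subset_closure hhx) (hVT₂ (hDV ⟨x, s.refl x, rfl⟩))

end Shrinkable

theorem decomposition_elements_small_nbhds_general {X : Type*} [TopologicalSpace X]
    [RegularSpace X] (s : Setoid X)
    (hcompact : ∀ x : X, IsCompact {y : X | s.r x y})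
    (hclosedmap : IsClosedMap (Quotient.mk s))
    -- shrinkability: for every open cover 𝒱 and every saturated open cover 𝒰 there is
    -- a homeomorphism shrinking each element into a member of 𝒱 and 𝒰-close to `id`
    (hshrink : ∀ 𝒱 𝒰 : Set (Set X),
      (∀ V ∈ 𝒱, IsOpen V) → ⋃₀ 𝒱 = Set.univ →
      (∀ U ∈ 𝒰, IsOpen U) → ⋃₀ 𝒰 = Set.univ →
      (∀ U ∈ 𝒰, ∀ x ∈ U, {y : X | s.r x y} ⊆ U) →
      ∃ h : X ≃ₜ X,
        (∀ x : X, ∃ V ∈ 𝒱, h '' {y : X | s.r x y} ⊆ V) ∧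
        (∀ x : X, ∃ U ∈ 𝒰, x ∈ U ∧ h x ∈ U))
    (P : Set X → Prop)
    (hP : ∀ (h : X ≃ₜ X) (A : Set X), P A → P (h ⁻¹' A))
    (hsmall : ∀ x : X, ∀ U : Set X, IsOpen U → x ∈ U →
      ∃ N : Set X, IsOpen N ∧ x ∈ N ∧ N ⊆ U ∧ P N) :
    ∀ x : X, ∀ W : Set X, IsOpen W → {y : X | s.r x y} ⊆ W →
      ∃ N : Set X, IsOpen N ∧ {y : X | s.r x y} ⊆ N ∧ N ⊆ W ∧ P N := by
  intro x W hW hDW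
  have hfib := Setoid.preimage_quotientMk_singleton (s := s) x
  obtain ⟨T₀, hT₀, hxT₀, hT₀W⟩ := hclosedmap.exists_isOpen_preimage_subset hW (hfib ▸ hDW)
  have hnbhds {T} (hT : IsOpen T) (hxT : Quotient.mk s x ∈ T) :=
    hclosedmap.exists_isOpen_closure_subset continuous_quotient_mk' Quotient.mk_surjective
      (hfib ▸ hcompact x) hT hxT
  obtain ⟨T₁, hT₁, hxT₁, h₁₀⟩ := hnbhds hT₀ hxT₀
  obtain ⟨T₂, hT₂, hxT₂, h₂₁⟩ := hnbhds hT₁ hxT₁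
  obtain ⟨T₃, -, hxT₃, h₃₂⟩ := hnbhds hT₂ hxT₂
  obtain ⟨N, hN, hDN, hNT₀, hPN⟩ := IsShrinkable.exists_isOpen_subset_preimage hshrink hP hsmall
    hT₀ hT₁ hT₂ h₁₀ h₂₁ h₃₂ hxT₃
  exact ⟨N, hN, hDN, hNT₀.trans hT₀W, hPN⟩

/-- Let `X` be a regular space and `s` a shrinkable upper semi-continuous decomposition
of `X`. If every point of `X` has arbitrarily small neighborhoods satisfying a fixed
topological (homeomorphism-invariant) property `P`, then every decomposition element
has arbitrarily small neighborhoods satisfying `P`. -/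
theorem decomposition_elements_small_nbhds {X : Type*} [TopologicalSpace X]
    [RegularSpace X] (s : Setoid X)
    (hclosed : ∀ x : X, IsClosed {y : X | s.r x y})
    (hcompact : ∀ x : X, IsCompact {y : X | s.r x y})
    (hclosedmap : IsClosedMap (Quotient.mk s))
    -- shrinkability: for every open cover 𝒱 and every saturated open cover 𝒰 there is
    -- a homeomorphism shrinking each element into a member of 𝒱 and 𝒰-close to `id`
    (hshrink : ∀ 𝒱 𝒰 : Set (Set X),
      (∀ V ∈ 𝒱, IsOpen V) → ⋃₀ 𝒱 = Set.univ →
      (∀ U ∈ 𝒰, IsOpen U) → ⋃₀ 𝒰 = Set.univ →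
      (∀ U ∈ 𝒰, ∀ x ∈ U, {y : X | s.r x y} ⊆ U) →
      ∃ h : X ≃ₜ X,
        (∀ x : X, ∃ V ∈ 𝒱, h '' {y : X | s.r x y} ⊆ V) ∧
        (∀ x : X, ∃ U ∈ 𝒰, x ∈ U ∧ h x ∈ U))
    (P : Set X → Prop)
    (hP : ∀ (h : X ≃ₜ X) (A : Set X), P A → P (h ⁻¹' A))
    (hsmall : ∀ x : X, ∀ U : Set X, IsOpen U → x ∈ U →
      ∃ N : Set X, IsOpen N ∧ x ∈ N ∧ N ⊆ U ∧ P N) :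
    ∀ x : X, ∀ W : Set X, IsOpen W → {y : X | s.r x y} ⊆ W →
      ∃ N : Set X, IsOpen N ∧ {y : X | s.r x y} ⊆ N ∧ N ⊆ W ∧ P N :=
  decomposition_elements_small_nbhds_general s hcompact hclosedmap hshrink P hP hsmall
end
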